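/- If there exists a closed oriented smooth 12-manifold whose rational Betti numbers satisfy b_0 = b_6 = b_12 = 1 and b_k = 0 for all other k, then 62/945 is an integer; hence no such manifold exists. Formally: there is no integer p (playing the role of the Pontryagin number p_3 with p_1 = p_2 = 0) such that the signature, which must be ±1 (since the middle cohomology is one-dimensional with a nondegenerate symmetric pairing), equals (1/945)(62·p - 13·0 + 2·0), i.e. there is no integer p with 945·σ = 62·p for σ = 1 or σ = -1. -/

import Mathlib

/-- If there were a closed oriented 12-manifold with `b_0 = b_6 = b_12 = 1` and all other
Betti numbers zero, Hirzebruch's signature theorem would force `945·σ = 62·p` for some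
integer `p` (the Pontryagin number `p_3`, since `p_1 = p_2 = 0`) with `σ = ±1`.
No such integer exists. -/
theorem stmt0 : ¬ ∃ (p σ : ℤ), (σ = 1 ∨ σ = -1) ∧ 945 * σ = 62 * p := by
  rintro ⟨p, σ, hσ, h⟩
  have hσ_odd : Odd σ := by rcases hσ with rfl | rfl <;> decide
  have h_odd : Odd (945 * σ) := (by decide : Odd (945 : ℤ)).mul hσ_odd
  have h_even : Even (62 * p) := (by decide : Even (62 : ℤ)).mul_right p
  exact Int.not_even_iff_odd.mpr h_odd (h ▸ h_even)
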